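/- Let m ≥ 2 be an integer, σ ≥ 2 real, and T > 0. Then ∫_0^T log ζ(σ + it) (m^{it} + (−1)^{n+1} m^{−it}) dt = (Λ(m)/(m^σ log m)) T + O(2^{−σ}), where the implied constant is absolute (independent of m, σ, T, n). -/

import Mathlib

/-!
For `σ ≥ 2` the principal logarithm `log ζ(s)` is the Dirichlet series `∑ Λ(k) / log k · k^(-s)`,
whose coefficients `a_k = Λ(k) / (k^σ log k)` are at most `4 · 2^(-σ) / k²`. Integrating term by
term, the `k`-th term contributes `a_k (∫₀ᵀ (m/k)^(it) dt ± ∫₀ᵀ (mk)^(-it) dt)`. For `k = m` the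
first integral is `T`, which gives the main term; every other integral `∫₀ᵀ e^(ibt) dt` is at most
`2 / |b|`. Since `|log m - log k| ≥ |m - k| / max m k`, we have
`1 / (k² |log m - log k|) ≤ 2 / k² + 1 / (k - m)²`, and both sums are bounded independently of `m`.
-/

open Complex ArithmeticFunction LSeries
open scoped Real

namespace LogZetaTwist

noncomputable def logZetaCoeff (σ : ℝ) (k : ℕ) : ℝ := Λ k / ((k : ℝ) ^ σ * Real.log k)

noncomputable abbrev vonMangoldtDivLog : ℕ → ℂ := fun n ↦ Λ n / Real.log n

lemma logZetaCoeff_nonneg (σ : ℝ) (k : ℕ) : 0 ≤ logZetaCoeff σ k :=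
  div_nonneg vonMangoldt_nonneg (mul_nonneg (by positivity) (Real.log_natCast_nonneg k))

lemma logZetaCoeff_le_one_div_rpow (σ : ℝ) (k : ℕ) : logZetaCoeff σ k ≤ 1 / (k : ℝ) ^ σ := by
  rcases Nat.lt_or_ge k 2 with hk | hk
  · interval_cases k <;> simp [logZetaCoeff, Real.rpow_nonneg, le_of_lt]
  · have hlog : 0 < Real.log k := Real.log_pos (by exact_mod_cast hk)
    have hpow : 0 < (k : ℝ) ^ σ := by positivity
    rw [logZetaCoeff, div_le_div_iff₀ (by positivity) hpow]
    nlinarith [vonMangoldt_le_log (n := k)]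

lemma one_div_rpow_le_of_two_le {σ x : ℝ} (hσ : 2 ≤ σ) (hx : 2 ≤ x) :
    1 / x ^ σ ≤ 4 * 2 ^ (-σ) / x ^ 2 := by
  have h2σ : (2 : ℝ) ^ σ = 2 ^ (σ - 2) * 4 := by
    rw [Real.rpow_sub (by norm_num)]; norm_num
  have hxσ : x ^ σ = x ^ (σ - 2) * x ^ 2 := by
    rw [Real.rpow_sub (by linarith), Real.rpow_two]; field_simp
  have hmono : (2 : ℝ) ^ (σ - 2) ≤ x ^ (σ - 2) := Real.rpow_le_rpow (by norm_num) hx (by linarith)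
  rw [Real.rpow_neg (by norm_num), h2σ, hxσ, div_le_div_iff₀ (by positivity) (by positivity)]
  field_simp
  nlinarith [sq_nonneg x]

lemma logZetaCoeff_le {σ : ℝ} (hσ : 2 ≤ σ) (k : ℕ) : logZetaCoeff σ k ≤ 4 * 2 ^ (-σ) / k ^ 2 := by
  rcases Nat.lt_or_ge k 2 with hk | hk
  · interval_cases k <;> simp [logZetaCoeff, Real.rpow_nonneg, le_of_lt]
  · exact (logZetaCoeff_le_one_div_rpow σ k).trans
      (one_div_rpow_le_of_two_le hσ (by exact_mod_cast hk))

lemma four_mul_two_rpow_neg_le_one {σ : ℝ} (hσ : 2 ≤ σ) : 4 * (2 : ℝ) ^ (-σ) ≤ 1 := by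
  have h := Real.rpow_le_rpow_of_exponent_le (x := 2) (by norm_num) (neg_le_neg hσ)
  have h4 : (2 : ℝ) ^ (-2 : ℝ) = 1 / 4 := by norm_num [Real.rpow_neg]
  rw [h4] at h
  linarith

lemma summable_logZetaCoeff {σ : ℝ} (hσ : 1 < σ) : Summable (logZetaCoeff σ) :=
  (Real.summable_one_div_nat_rpow.mpr hσ).of_nonneg_of_le (logZetaCoeff_nonneg σ)
    (logZetaCoeff_le_one_div_rpow σ)

lemma norm_term_vonMangoldtDivLog (s : ℂ) (k : ℕ) :
    ‖term vonMangoldtDivLog s k‖ = logZetaCoeff s.re k := by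
  rcases eq_or_ne k 0 with rfl | hk
  · simp [logZetaCoeff]
  · rw [norm_term_eq, if_neg hk, logZetaCoeff, norm_div, norm_real, norm_real, Real.norm_of_nonneg
      vonMangoldt_nonneg, Real.norm_of_nonneg (Real.log_natCast_nonneg k), div_div, mul_comm]

lemma LSeriesHasSum_vonMangoldtDivLog {s : ℂ} (hs : 1 < s.re) :
    LSeriesHasSum vonMangoldtDivLog s (LSeries vonMangoldtDivLog s) :=
  LSeriesSummable.LSeriesHasSum <| Summable.of_norm <| by
    simpa only [norm_term_vonMangoldtDivLog] using summable_logZetaCoeff hs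

lemma log_riemannZeta_eq_LSeries {s : ℂ} (hs : 2 ≤ s.re) :
    log (riemannZeta s) = LSeries vonMangoldtDivLog s := by
  have hL := LSeriesHasSum_vonMangoldtDivLog (s := s) (by linarith)
  have hmaj : HasSum (fun k : ℕ ↦ 1 / (k : ℝ) ^ 2) (π ^ 2 / 6) := hasSum_zeta_two
  have hnorm : ‖LSeries vonMangoldtDivLog s‖ ≤ π ^ 2 / 6 := by
    refine hL.norm_le_of_bounded hmaj fun k ↦ ?_
    rw [norm_term_vonMangoldtDivLog]
    refine (logZetaCoeff_le hs k).trans ?_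
    rw [div_eq_mul_one_div]
    exact mul_le_of_le_one_left (by positivity) (four_mul_two_rpow_neg_le_one hs)
  have him : |(LSeries vonMangoldtDivLog s).im| < π :=
    (abs_im_le_norm _).trans_lt (hnorm.trans_lt (by nlinarith [Real.pi_gt_three, Real.pi_lt_four]))
  rw [← riemannZeta_eq_exp_LSeries (by linarith), log_exp (abs_lt.mp him).1 (abs_lt.mp him).2.le]

noncomputable def oscIntegral (b T : ℝ) : ℂ := ∫ t in (0 : ℝ)..T, exp (b * t * I)

lemma oscIntegral_zero (T : ℝ) : oscIntegral 0 T = T := by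
  simp [oscIntegral]

lemma norm_oscIntegral_le {b : ℝ} (hb : b ≠ 0) (T : ℝ) : ‖oscIntegral b T‖ ≤ 2 / |b| := by
  have hbI : (b : ℂ) * I ≠ 0 := mul_ne_zero (ofReal_ne_zero.mpr hb) I_ne_zero
  have hunit (t : ℝ) : ‖exp ((b : ℂ) * I * t)‖ = 1 := by
    rw [norm_exp]; simp
  simp_rw [oscIntegral, mul_right_comm _ _ I, integral_exp_mul_complex hbI, norm_div, norm_mul,
    norm_I, norm_real, Real.norm_eq_abs, mul_one]
  gcongr
  exact (norm_sub_le _ _).trans (by rw [hunit, hunit]; norm_num)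

lemma natCast_cpow_I_mul_ofReal {k : ℕ} (hk : k ≠ 0) (t : ℝ) :
    (k : ℂ) ^ (I * t) = exp (Real.log k * t * I) := by
  rw [cpow_def_of_ne_zero (by exact_mod_cast hk), ← natCast_log]
  ring_nf

lemma term_vonMangoldtDivLog_mul_twist (σ t : ℝ) {m : ℕ} (hm : m ≠ 0) (e : ℂ) (k : ℕ) :
    term vonMangoldtDivLog (σ + t * I) k * ((m : ℂ) ^ (I * t) + e * (m : ℂ) ^ (-(I * t)))
      = logZetaCoeff σ k * (exp ((Real.log m - Real.log k : ℝ) * t * I)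
          + e * exp ((-(Real.log m + Real.log k) : ℝ) * t * I)) := by
  rcases eq_or_ne k 0 with rfl | hk
  · simp [logZetaCoeff]
  have hk' : (k : ℂ) ≠ 0 := by exact_mod_cast hk
  have hsplit : (k : ℂ) ^ ((σ : ℂ) + t * I) = ((k : ℝ) ^ σ : ℝ) * (k : ℂ) ^ (I * t) := by
    rw [cpow_add _ _ hk', ofReal_cpow (Nat.cast_nonneg k), mul_comm (t : ℂ)]
    norm_cast
  rw [term_of_ne_zero hk, hsplit, cpow_neg, natCast_cpow_I_mul_ofReal hk,
    natCast_cpow_I_mul_ofReal hm, logZetaCoeff]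
  have hdiff : exp ((Real.log m - Real.log k : ℝ) * t * I)
      = exp (Real.log m * t * I) / exp (Real.log k * t * I) := by
    rw [← exp_sub]; push_cast; ring_nf
  have hsum : exp ((-(Real.log m + Real.log k) : ℝ) * t * I)
      = (exp (Real.log m * t * I) * exp (Real.log k * t * I))⁻¹ := by
    rw [← exp_add, ← exp_neg]; push_cast; ring_nf
  have hσ : (((k : ℝ) ^ σ : ℝ) : ℂ) ≠ 0 :=
    ofReal_ne_zero.mpr (Real.rpow_pos_of_pos (by positivity) σ).ne'
  rw [hdiff, hsum, vonMangoldtDivLog]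
  push_cast
  field_simp

lemma norm_exp_ofReal_mul_ofReal_mul_I (b t : ℝ) : ‖exp (b * t * I)‖ = 1 := by
  simpa using norm_exp_ofReal_mul_I (b * t)

lemma continuous_exp_ofReal_mul_mul_I (b : ℝ) : Continuous fun t : ℝ ↦ exp (b * t * I) := by
  fun_prop

lemma hasSum_integral_log_riemannZeta_mul_twist {σ : ℝ} (hσ : 2 ≤ σ) {m : ℕ} (hm : m ≠ 0)
    (e : ℂ) (T : ℝ) :
    HasSum (fun k ↦ (logZetaCoeff σ k : ℂ) * (oscIntegral (Real.log m - Real.log k) T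
        + e * oscIntegral (-(Real.log m + Real.log k)) T))
      (∫ t in (0 : ℝ)..T, log (riemannZeta (σ + t * I)) *
        ((m : ℂ) ^ (I * t) + e * (m : ℂ) ^ (-(I * t)))) := by
  set F : ℕ → ℝ → ℂ := fun k t ↦ logZetaCoeff σ k * (exp ((Real.log m - Real.log k : ℝ) * t * I)
    + e * exp ((-(Real.log m + Real.log k) : ℝ) * t * I))
  have hFcont (k : ℕ) : Continuous (F k) := by fun_prop
  have hFint (k : ℕ) : ∫ t in (0 : ℝ)..T, F k t = logZetaCoeff σ k *
      (oscIntegral (Real.log m - Real.log k) T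
        + e * oscIntegral (-(Real.log m + Real.log k)) T) := by
    rw [intervalIntegral.integral_const_mul, intervalIntegral.integral_add
      ((continuous_exp_ofReal_mul_mul_I _).intervalIntegrable _ _)
      (((continuous_exp_ofReal_mul_mul_I _).intervalIntegrable _ _).const_mul e),
      intervalIntegral.integral_const_mul, oscIntegral, oscIntegral]
  have hFbound (k : ℕ) (t : ℝ) : ‖F k t‖ ≤ logZetaCoeff σ k * (1 + ‖e‖) := by
    simp only [F, norm_mul, norm_real, Real.norm_of_nonneg (logZetaCoeff_nonneg σ k)]
    refine mul_le_mul_of_nonneg_left ((norm_add_le (E := ℂ) _ _).trans_eq ?_)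
      (logZetaCoeff_nonneg σ k)
    rw [norm_mul, norm_exp_ofReal_mul_ofReal_mul_I, norm_exp_ofReal_mul_ofReal_mul_I, mul_one]
  have hlim (t : ℝ) : HasSum (fun k ↦ F k t) (log (riemannZeta (σ + t * I)) *
      ((m : ℂ) ^ (I * t) + e * (m : ℂ) ^ (-(I * t)))) := by
    have hre : (σ + t * I : ℂ).re = σ := by simp
    rw [log_riemannZeta_eq_LSeries (by rw [hre]; exact hσ)]
    have h := (LSeriesHasSum_vonMangoldtDivLog (by rw [hre]; linarith)).mul_right
      ((m : ℂ) ^ (I * t) + e * (m : ℂ) ^ (-(I * t)))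
    simpa only [term_vonMangoldtDivLog_mul_twist σ t hm e] using h
  simp_rw [← hFint]
  exact intervalIntegral.hasSum_integral_of_dominated_convergence
    (fun k _ ↦ logZetaCoeff σ k * (1 + ‖e‖)) (fun k ↦ (hFcont k).aestronglyMeasurable)
    (fun k ↦ MeasureTheory.ae_of_all _ fun t _ ↦ hFbound k t)
    (MeasureTheory.ae_of_all _ fun _ _ ↦ (summable_logZetaCoeff (by linarith)).mul_right _)
    intervalIntegrable_const (MeasureTheory.ae_of_all _ fun t _ ↦ hlim t)

lemma sub_div_le_log_sub_log {a b : ℝ} (ha : 0 < a) (hab : a < b) :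
    (b - a) / b ≤ Real.log b - Real.log a := by
  have hb : 0 < b := ha.trans hab
  have h := Real.one_sub_inv_le_log_of_pos (div_pos hb ha)
  rw [Real.log_div hb.ne' ha.ne', inv_div] at h
  calc (b - a) / b = 1 - a / b := by field_simp
    _ ≤ _ := h

lemma one_div_sq_mul_abs_log_sub_le {x y : ℝ} (hx : 0 < x) (hy : 0 < y) (hxy : x ≠ y) :
    1 / (x ^ 2 * |Real.log y - Real.log x|) ≤ 2 / x ^ 2 + 1 / (x - y) ^ 2 := by
  rcases hxy.lt_or_gt with h | h
  · have hlog := sub_div_le_log_sub_log hx h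
    have hyx : 0 < y - x := sub_pos.mpr h
    rw [abs_of_pos (lt_of_lt_of_le (by positivity) hlog)]
    have hamgm : 1 / x * (1 / (y - x)) ≤ (1 / x) ^ 2 + (1 / (y - x)) ^ 2 := by
      nlinarith [sq_nonneg (1 / x - 1 / (y - x)), one_div_pos.mpr hx, one_div_pos.mpr hyx]
    calc 1 / (x ^ 2 * (Real.log y - Real.log x)) ≤ 1 / (x ^ 2 * ((y - x) / y)) := by gcongr
      _ = (1 / x) ^ 2 + 1 / x * (1 / (y - x)) := by field_simp; ring
      _ ≤ 2 * (1 / x) ^ 2 + (1 / (y - x)) ^ 2 := by linarith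
      _ = 2 / x ^ 2 + 1 / (x - y) ^ 2 := by
        rw [show (x - y) ^ 2 = (y - x) ^ 2 by ring]; simp only [div_pow, one_pow]; ring
  · have hlog := sub_div_le_log_sub_log hy h
    have hxy : 0 < x - y := sub_pos.mpr h
    rw [abs_sub_comm, abs_of_pos (lt_of_lt_of_le (by positivity) hlog)]
    calc 1 / (x ^ 2 * (Real.log x - Real.log y)) ≤ 1 / (x ^ 2 * ((x - y) / x)) := by gcongr
      _ = 1 / (x * (x - y)) := by field_simp
      _ ≤ 1 / (x - y) ^ 2 := by rw [sq]; gcongr; linarith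
      _ ≤ 2 / x ^ 2 + 1 / (x - y) ^ 2 := le_add_of_nonneg_left (by positivity)

lemma one_div_sq_mul_abs_log_sub_le_natCast (k : ℕ) {m : ℕ} (hm : m ≠ 0) :
    1 / ((k : ℝ) ^ 2 * |Real.log m - Real.log k|) ≤ 2 / k ^ 2 + 1 / ((k : ℝ) - m) ^ 2 := by
  -- at `k = 0` and `k = m` the left side is `1 / 0 = 0`
  rcases eq_or_ne k 0 with rfl | hk
  · simp
  rcases eq_or_ne k m with rfl | hkm
  · simp; positivity
  exact one_div_sq_mul_abs_log_sub_le (by positivity) (by positivity) (by exact_mod_cast hkm)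

lemma hasSum_one_div_intCast_sq : HasSum (fun n : ℤ ↦ 1 / (n : ℝ) ^ 2) (π ^ 2 / 3) := by
  have hneg : HasSum (fun n : ℕ ↦ 1 / (((-(n + 1) : ℤ) : ℝ)) ^ 2) (π ^ 2 / 6) := by
    have h := (hasSum_nat_add_iff' 1).mpr hasSum_zeta_two
    rw [Finset.sum_range_one, Nat.cast_zero, zero_pow two_ne_zero, div_zero, sub_zero] at h
    have hfun : (fun n : ℕ ↦ 1 / (((-(n + 1) : ℤ) : ℝ)) ^ 2)
        = fun n ↦ 1 / ((n + 1 : ℕ) : ℝ) ^ 2 := by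
      funext n
      push_cast
      ring
    rw [hfun]
    exact h
  rw [show π ^ 2 / 3 = π ^ 2 / 6 + π ^ 2 / 6 by ring]
  exact HasSum.of_nat_of_neg_add_one (f := fun n : ℤ ↦ 1 / (n : ℝ) ^ 2) hasSum_zeta_two hneg

lemma summable_one_div_natCast_sub_sq (m : ℕ) : Summable fun k : ℕ ↦ 1 / ((k : ℝ) - m) ^ 2 := by
  have hinj : Function.Injective fun k : ℕ ↦ (k : ℤ) - m := fun a b h ↦ by simpa using h
  simpa [Function.comp_def] using hasSum_one_div_intCast_sq.summable.comp_injective hinj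

lemma tsum_one_div_natCast_sub_sq_le (m : ℕ) : ∑' k : ℕ, 1 / ((k : ℝ) - m) ^ 2 ≤ π ^ 2 / 3 := by
  have hinj : Function.Injective fun k : ℕ ↦ (k : ℤ) - m := fun a b h ↦ by simpa using h
  rw [← hasSum_one_div_intCast_sq.tsum_eq]
  simpa [Function.comp_def] using tsum_comp_le_tsum_of_inj hasSum_one_div_intCast_sq.summable
    (fun n ↦ by positivity) hinj

lemma norm_twistIntegral_sub_le (σ : ℝ) {m : ℕ} (hm : 2 ≤ m) {e : ℂ} (he : ‖e‖ ≤ 1) (T : ℝ)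
    (k : ℕ) :
    ‖(logZetaCoeff σ k : ℂ) * (oscIntegral (Real.log m - Real.log k) T
        + e * oscIntegral (-(Real.log m + Real.log k)) T)
      - (if k = m then ((logZetaCoeff σ m * T : ℝ) : ℂ) else 0)‖
      ≤ 2 * logZetaCoeff σ k * (|Real.log m - Real.log k|⁻¹ + (Real.log 2)⁻¹) := by
  have ha := logZetaCoeff_nonneg σ k
  have hlog2 : 0 < Real.log 2 := Real.log_pos one_lt_two
  have hlogm : Real.log 2 ≤ Real.log m := Real.log_le_log two_pos (by exact_mod_cast hm)
  have hsum : Real.log 2 ≤ Real.log m + Real.log k := by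
    linarith [Real.log_natCast_nonneg k]
  have hfar : ‖e * oscIntegral (-(Real.log m + Real.log k)) T‖ ≤ 2 * (Real.log 2)⁻¹ := by
    rw [norm_mul]
    refine (mul_le_of_le_one_left (norm_nonneg _) he).trans <|
      (norm_oscIntegral_le (by linarith) T).trans ?_
    rw [abs_neg, abs_of_pos (by linarith), div_eq_mul_inv]
    gcongr
  by_cases hkm : k = m
  · -- the non-oscillating integral `oscIntegral 0 T = T` is exactly the main term
    subst hkm
    rw [if_pos rfl, sub_self, oscIntegral_zero, ofReal_mul, mul_add, add_sub_cancel_left, norm_mul,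
      norm_real, Real.norm_of_nonneg ha]
    rw [abs_zero, inv_zero, zero_add]
    calc logZetaCoeff σ k * ‖e * oscIntegral (-(Real.log k + Real.log k)) T‖
        ≤ logZetaCoeff σ k * (2 * (Real.log 2)⁻¹) := mul_le_mul_of_nonneg_left hfar ha
      _ = _ := by ring
  have hdiff : Real.log m - Real.log k ≠ 0 := by
    rw [sub_ne_zero]
    rcases eq_or_ne k 0 with rfl | hk
    · rw [Nat.cast_zero, Real.log_zero]
      exact (hlog2.trans_le hlogm).ne'
    · exact fun h ↦ hkm (by exact_mod_cast (Real.log_injOn_pos (Set.mem_Ioi.mpr (by positivity))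
        (Set.mem_Ioi.mpr (by positivity)) h).symm)
  rw [if_neg hkm, sub_zero, norm_mul, norm_real, Real.norm_of_nonneg ha]
  calc logZetaCoeff σ k * ‖oscIntegral (Real.log m - Real.log k) T
        + e * oscIntegral (-(Real.log m + Real.log k)) T‖
      ≤ logZetaCoeff σ k * (2 / |Real.log m - Real.log k| + 2 * (Real.log 2)⁻¹) := by
        gcongr
        exact (norm_add_le _ _).trans (add_le_add (norm_oscIntegral_le hdiff T) hfar)
    _ = _ := by ring

lemma norm_twistIntegral_sub_le_majorant {σ : ℝ} (hσ : 2 ≤ σ) {m : ℕ} (hm : 2 ≤ m) {e : ℂ}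
    (he : ‖e‖ ≤ 1) (T : ℝ) (k : ℕ) :
    ‖(logZetaCoeff σ k : ℂ) * (oscIntegral (Real.log m - Real.log k) T
        + e * oscIntegral (-(Real.log m + Real.log k)) T)
      - (if k = m then ((logZetaCoeff σ m * T : ℝ) : ℂ) else 0)‖
      ≤ 2 ^ (-σ) * (32 * (1 / (k : ℝ) ^ 2) + 8 * (1 / ((k : ℝ) - m) ^ 2)) := by
  refine (norm_twistIntegral_sub_le σ hm he T k).trans ?_
  have hcoeff := logZetaCoeff_le hσ k
  have hε : (0 : ℝ) < 2 ^ (-σ) := by positivity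
  have hlog2 : (Real.log 2)⁻¹ ≤ 2 := by
    rw [inv_le_comm₀ (Real.log_pos one_lt_two) two_pos]
    linarith [Real.log_two_gt_d9]
  have hnear : logZetaCoeff σ k * |Real.log m - Real.log k|⁻¹
      ≤ 4 * 2 ^ (-σ) * (2 / k ^ 2 + 1 / ((k : ℝ) - m) ^ 2) := calc
    _ ≤ 4 * 2 ^ (-σ) / k ^ 2 * |Real.log m - Real.log k|⁻¹ := by gcongr
    _ = 4 * 2 ^ (-σ) * (1 / ((k : ℝ) ^ 2 * |Real.log m - Real.log k|)) := by ring
    _ ≤ _ := by gcongr; exact one_div_sq_mul_abs_log_sub_le_natCast k (by omega)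
  have hfar : logZetaCoeff σ k * (Real.log 2)⁻¹ ≤ 4 * 2 ^ (-σ) / k ^ 2 * 2 :=
    mul_le_mul hcoeff hlog2 (by positivity) (by positivity)
  have h2 : 2 / (k : ℝ) ^ 2 = 2 * (1 / k ^ 2) := by ring
  have h4 : 4 * 2 ^ (-σ) / (k : ℝ) ^ 2 = 4 * 2 ^ (-σ) * (1 / k ^ 2) := by ring
  nlinarith

end LogZetaTwist

open LogZetaTwist

/-- for m ≥ 2, σ ≥ 2, T > 0 and any integer n ≥ 1,
    ∫_0^T log ζ(σ+it)(m^{it} + (−1)^{n+1} m^{−it}) dt = (Λ(m)/(m^σ log m)) T + O(2^{−σ}),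
    with an absolute implied constant. -/
theorem integral_log_zeta_twisted :
    ∃ C > 0, ∀ (m n : ℕ) (σ T : ℝ), 2 ≤ m → 1 ≤ n → 2 ≤ σ → 0 < T →
      ‖(∫ t in (0:ℝ)..T, Complex.log (riemannZeta (σ + t * Complex.I)) *
            ((m : ℂ) ^ (Complex.I * t) + (-1) ^ (n + 1) * (m : ℂ) ^ (-(Complex.I * t))))
          - ((ArithmeticFunction.vonMangoldt m / ((m : ℝ) ^ σ * Real.log m) * T : ℝ) : ℂ)‖
        ≤ C * (2 : ℝ) ^ (-σ) := by
  refine ⟨8 * π ^ 2, by positivity, fun m n σ T hm _ hσ _ ↦ ?_⟩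
  have he : ‖(-1 : ℂ) ^ (n + 1)‖ ≤ 1 := by simp
  have hseries := (hasSum_integral_log_riemannZeta_mul_twist hσ (show m ≠ 0 by omega)
    ((-1) ^ (n + 1)) T).sub (hasSum_ite_eq m ((logZetaCoeff σ m * T : ℝ) : ℂ))
  have hmajorant := ((hasSum_zeta_two.mul_left 32).add
    ((summable_one_div_natCast_sub_sq m).hasSum.mul_left 8)).mul_left ((2 : ℝ) ^ (-σ))
  calc _ ≤ _ := hseries.norm_le_of_bounded hmajorant
        (norm_twistIntegral_sub_le_majorant hσ hm he T)
    _ ≤ 8 * π ^ 2 * 2 ^ (-σ) := by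
      have hshift := tsum_one_div_natCast_sub_sq_le m
      have hε : (0 : ℝ) < 2 ^ (-σ) := by positivity
      nlinarith
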